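/- Let n ≥ 1, let A be an IFM of order n and let λ ∈ [0,1]. Then for every m ≥ 1 and all i, j, the m-th power of A under the ∗ operation satisfies (A^m)μ i j = max over all m-paths P from i to j of wμ(P) and (A^m)ν i j = min over all m-paths P from i to j of wν(P). -/

import Mathlib

open Filter Topology

/-- Membership scalar operation of the convex combination of max-min and
maxarithmetic mean–minarithmetic mean: `x ⊛ y = λ·min(x,y) + (1-λ)·(x+y)/2`. -/
noncomputable def starMu (lam x y : ℝ) : ℝ :=
  lam * min x y + (1 - lam) * ((x + y) / 2)

/-- Non-membership scalar operation:
`x ⊛' y = λ·max(x,y) + (1-λ)·(x+y)/2`. -/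
noncomputable def starNu (lam x y : ℝ) : ℝ :=
  lam * max x y + (1 - lam) * ((x + y) / 2)

/-- `A` (given by membership part `Amu` and non-membership part `Anu`) is an
intuitionistic fuzzy matrix. -/
def IsIFM (n : ℕ) (Amu Anu : Fin n → Fin n → ℝ) : Prop :=
  ∀ i j, 0 ≤ Amu i j ∧ 0 ≤ Anu i j ∧ Amu i j + Anu i j ≤ 1

/-- Powers of an IFM under the convex combination `∗` of the max-min and the
maxarithmetic mean–minarithmetic mean operations: `A^1 = A`,
`A^(k+1) = A^k ∗ A` with
`(X ∗ A)μ i j = max_t (Xμ i t ⊛ Aμ t j)` and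
`(X ∗ A)ν i j = min_t (Xν i t ⊛' Aν t j)`.
(The value at `0` is irrelevant; it is set to `A`.) -/
noncomputable def sPow (n : ℕ) (lam : ℝ) (Amu Anu : Fin n → Fin n → ℝ) :
    ℕ → (Fin n → Fin n → ℝ) × (Fin n → Fin n → ℝ)
  | 0 => (Amu, Anu)
  | 1 => (Amu, Anu)
  | m + 2 =>
    let X := sPow n lam Amu Anu (m + 1)
    (fun i j => ⨆ t : Fin n, starMu lam (X.1 i t) (Amu t j),
     fun i j => ⨅ t : Fin n, starNu lam (X.2 i t) (Anu t j))

/-- Left-associated fold of a nonempty list of edge values under a binary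
operation `f` (the empty list, which never occurs for paths, is sent to `0`). -/
noncomputable def foldWeight (f : ℝ → ℝ → ℝ) : List ℝ → ℝ
  | [] => 0
  | x :: xs => xs.foldl f x

/-- Weight of an `m`-path `P` under the `∗` operation, with respect to the
entry matrix `B` and scalar operation `f` (`B = Aμ, f = ⊛` gives `wμ(P)`;
`B = Aν, f = ⊛'` gives `wν(P)`): the left-associated fold of the edge values. -/
noncomputable def sWeight (n m : ℕ) (f : ℝ → ℝ → ℝ) (B : Fin n → Fin n → ℝ)
    (P : Fin (m + 1) → Fin n) : ℝ :=
  foldWeight f (List.ofFn fun k : Fin m => B (P k.castSucc) (P k.succ))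

/-!
A path of length `m + 2` from `i` to `j` is a path of length `m + 1` from `i` to some `t`
followed by the edge `t → j`, and its weight is `w ⊛ Aμ t j` where `w` is the weight of the
shorter path. For `λ ∈ [0, 1]` the map `x ↦ x ⊛ y` is monotone, so over the finitely many shorter
paths the maximum commutes with `⊛ Aμ t j`; hence the path maxima obey the recursion defining the
powers. The non-membership part is the same argument with minima and `⊛'`.
-/

section FiniteSupremum

variable {ι α : Type*} [Finite ι] [Nonempty ι]

theorem Monotone.map_ciSup_of_finite {β : Type*} [ConditionallyCompleteLinearOrder α]
    [ConditionallyCompleteLattice β] {f : α → β} (hf : Monotone f) (g : ι → α) :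
    f (⨆ i, g i) = ⨆ i, f (g i) := by
  obtain ⟨i₀, hi₀⟩ := exists_eq_ciSup_of_finite (f := g)
  refine le_antisymm ?_ (ciSup_le fun i => hf (le_ciSup (Finite.bddAbove_range g) i))
  rw [← hi₀]
  exact le_ciSup (Finite.bddAbove_range fun i => f (g i)) i₀

theorem Monotone.map_ciInf_of_finite {β : Type*} [ConditionallyCompleteLinearOrder α]
    [ConditionallyCompleteLattice β] {f : α → β} (hf : Monotone f) (g : ι → α) :
    f (⨅ i, g i) = ⨅ i, f (g i) :=
  hf.dual.map_ciSup_of_finite g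

theorem ciSup_sigma_of_finite [ConditionallyCompleteLattice α] {κ : ι → Type*}
    [∀ i, Finite (κ i)] [∀ i, Nonempty (κ i)] (g : (Σ i, κ i) → α) :
    ⨆ x, g x = ⨆ i, ⨆ k, g ⟨i, k⟩ := by
  have : Nonempty (Σ i, κ i) := let ⟨i⟩ := ‹Nonempty ι›; ⟨⟨i, Classical.arbitrary _⟩⟩
  refine le_antisymm (ciSup_le fun ⟨i, k⟩ => ?_)
    (ciSup_le fun i => ciSup_le fun k => le_ciSup (Finite.bddAbove_range g) ⟨i, k⟩)
  exact le_ciSup_of_le (Finite.bddAbove_range _) i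
    (le_ciSup (Finite.bddAbove_range fun k => g ⟨i, k⟩) k)

theorem ciInf_sigma_of_finite [ConditionallyCompleteLattice α] {κ : ι → Type*}
    [∀ i, Finite (κ i)] [∀ i, Nonempty (κ i)] (g : (Σ i, κ i) → α) :
    ⨅ x, g x = ⨅ i, ⨅ k, g ⟨i, k⟩ :=
  ciSup_sigma_of_finite (α := αᵒᵈ) g

end FiniteSupremum

theorem starMu_mono_left {lam : ℝ} (h0 : 0 ≤ lam) (h1 : lam ≤ 1) (y : ℝ) :
    Monotone (starMu lam · y) := fun x x' h => by
  unfold starMu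
  nlinarith [min_le_min_right y h]

theorem starNu_mono_left {lam : ℝ} (h0 : 0 ≤ lam) (h1 : lam ≤ 1) (y : ℝ) :
    Monotone (starNu lam · y) := fun x x' h => by
  unfold starNu
  nlinarith [max_le_max_right y h]

abbrev FinPath (n m : ℕ) (i j : Fin n) : Type :=
  {P : Fin (m + 1) → Fin n // P 0 = i ∧ P (Fin.last m) = j}

instance FinPath.instNonempty (n m : ℕ) (i j : Fin n) : Nonempty (FinPath n (m + 1) i j) :=
  ⟨⟨Fin.cons i fun _ => j, rfl, by rw [← Fin.succ_last, Fin.cons_succ]⟩⟩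

def FinPath.snoc {n m : ℕ} {i : Fin n} (j : Fin n) (P : Σ t, FinPath n m i t) :
    FinPath n (m + 1) i j :=
  ⟨Fin.snoc P.2.1 j, (Fin.snoc_castSucc (i := 0) ..).trans P.2.2.1, Fin.snoc_last _ _⟩

theorem FinPath.snoc_surjective {n m : ℕ} (i j : Fin n) :
    Function.Surjective (FinPath.snoc (m := m) (i := i) j) := fun Q =>
  ⟨⟨Q.1 (Fin.last m).castSucc, Fin.init Q.1, Q.2.1, rfl⟩,
    Subtype.ext (by simpa only [FinPath.snoc, ← Q.2.2] using Fin.snoc_init_self Q.1)⟩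

theorem foldWeight_concat (f : ℝ → ℝ → ℝ) {l : List ℝ} (hl : l ≠ []) (x : ℝ) :
    foldWeight f (l.concat x) = f (foldWeight f l) x := by
  cases l with
  | nil => exact absurd rfl hl
  | cons a xs => simp [foldWeight]

theorem sWeight_succ {n m : ℕ} (hm : m ≠ 0) (f : ℝ → ℝ → ℝ) (B : Fin n → Fin n → ℝ)
    (Q : Fin (m + 2) → Fin n) :
    sWeight n (m + 1) f B Q =
      f (sWeight n m f B (Fin.init Q)) (B (Q (Fin.last m).castSucc) (Q (Fin.last (m + 1)))) := by
  rw [sWeight, List.ofFn_succ', foldWeight_concat _ (by simpa using hm), Fin.succ_last]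
  simp only [sWeight, Fin.init, Fin.succ_castSucc]

theorem sWeight_snoc {n m : ℕ} (hm : m ≠ 0) (f : ℝ → ℝ → ℝ) (B : Fin n → Fin n → ℝ)
    (P : Fin (m + 1) → Fin n) (j : Fin n) :
    sWeight n (m + 1) f B (Fin.snoc P j) = f (sWeight n m f B P) (B (P (Fin.last m)) j) := by
  rw [sWeight_succ hm, Fin.init_snoc, Fin.snoc_castSucc, Fin.snoc_last]

section PathExtremes

variable {n : ℕ} {f : ℝ → ℝ → ℝ} (B : Fin n → Fin n → ℝ)

theorem sWeight_of_length_one {i j : Fin n} (P : FinPath n 1 i j) :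
    sWeight n 1 f B P.1 = B i j :=
  congrArg₂ B P.2.1 P.2.2

theorem iSup_sWeight_one (i j : Fin n) : ⨆ P : FinPath n 1 i j, sWeight n 1 f B P.1 = B i j := by
  simp only [sWeight_of_length_one, ciSup_const]

theorem iInf_sWeight_one (i j : Fin n) : ⨅ P : FinPath n 1 i j, sWeight n 1 f B P.1 = B i j := by
  simp only [sWeight_of_length_one, ciInf_const]

variable {B} in
theorem iSup_sWeight_succ (hf : ∀ b, Monotone (f · b)) {m : ℕ} (i j : Fin n) :
    ⨆ Q : FinPath n (m + 2) i j, sWeight n (m + 2) f B Q.1 =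
      ⨆ t, f (⨆ P : FinPath n (m + 1) i t, sWeight n (m + 1) f B P.1) (B t j) := by
  have : Nonempty (Fin n) := ⟨i⟩
  rw [← (FinPath.snoc_surjective i j).iSup_comp, ciSup_sigma_of_finite]
  refine iSup_congr fun t => ?_
  rw [(hf _).map_ciSup_of_finite]
  refine iSup_congr fun P => ?_
  rw [FinPath.snoc, sWeight_snoc m.succ_ne_zero, P.2.2]

variable {B} in
theorem iInf_sWeight_succ (hf : ∀ b, Monotone (f · b)) {m : ℕ} (i j : Fin n) :
    ⨅ Q : FinPath n (m + 2) i j, sWeight n (m + 2) f B Q.1 =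
      ⨅ t, f (⨅ P : FinPath n (m + 1) i t, sWeight n (m + 1) f B P.1) (B t j) := by
  have : Nonempty (Fin n) := ⟨i⟩
  rw [← (FinPath.snoc_surjective i j).iInf_comp, ciInf_sigma_of_finite]
  refine iInf_congr fun t => ?_
  rw [(hf _).map_ciInf_of_finite]
  refine iInf_congr fun P => ?_
  rw [FinPath.snoc, sWeight_snoc m.succ_ne_zero, P.2.2]

end PathExtremes

theorem sPow_eq_extreme_weight_general (n : ℕ)
    (Amu Anu : Fin n → Fin n → ℝ)
    (lam : ℝ) (hlam : lam ∈ Set.Icc (0 : ℝ) 1)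
    (m : ℕ) (hm : 1 ≤ m) (i j : Fin n) :
    (sPow n lam Amu Anu m).1 i j =
        (⨆ P : {P : Fin (m + 1) → Fin n // P 0 = i ∧ P (Fin.last m) = j},
          sWeight n m (starMu lam) Amu P.1) ∧
      (sPow n lam Amu Anu m).2 i j =
        ⨅ P : {P : Fin (m + 1) → Fin n // P 0 = i ∧ P (Fin.last m) = j},
          sWeight n m (starNu lam) Anu P.1 := by
  obtain ⟨h0, h1⟩ := hlam
  obtain ⟨k, rfl⟩ := Nat.exists_eq_add_of_le' hm
  clear hm
  induction k generalizing i j with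
  | zero => exact ⟨(iSup_sWeight_one Amu i j).symm, (iInf_sWeight_one Anu i j).symm⟩
  | succ k ih =>
    refine ⟨?_, ?_⟩
    · simp only [sPow, fun t => (ih i t).1]
      exact (iSup_sWeight_succ (starMu_mono_left h0 h1) i j).symm
    · simp only [sPow, fun t => (ih i t).2]
      exact (iInf_sWeight_succ (starNu_mono_left h0 h1) i j).symm

/-- Lemma 4.4: the `(i,j)` entry of the `m`-th power of `A` under the `∗`
operation is the maximum (resp. minimum) over all `m`-paths from `i` to `j` of
the membership (resp. non-membership) path weights. -/
theorem sPow_eq_extreme_weight (n : ℕ) (hn : 1 ≤ n)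
    (Amu Anu : Fin n → Fin n → ℝ) (hA : IsIFM n Amu Anu)
    (lam : ℝ) (hlam : lam ∈ Set.Icc (0 : ℝ) 1)
    (m : ℕ) (hm : 1 ≤ m) (i j : Fin n) :
    (sPow n lam Amu Anu m).1 i j =
        (⨆ P : {P : Fin (m + 1) → Fin n // P 0 = i ∧ P (Fin.last m) = j},
          sWeight n m (starMu lam) Amu P.1) ∧
      (sPow n lam Amu Anu m).2 i j =
        ⨅ P : {P : Fin (m + 1) → Fin n // P 0 = i ∧ P (Fin.last m) = j},
          sWeight n m (starNu lam) Anu P.1 :=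
  sPow_eq_extreme_weight_general n Amu Anu lam hlam m hm i j
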